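/- arXiv:2408.09083 — 2 statements merged into one kernel-verified Lean document; each statement's English description precedes it below -/
import Mathlib

section
/- Let N ≥ 2, let T be a tree on vertex set Fin N rooted at a vertex r, and let s : Fin N → {0,1} be the unique proper 2-coloring of T with s(r)=0 (s takes different values on the two endpoints of every edge of T), with s̄ its bitwise complement. Then the one-round iHVA-tree state with all angles equal to π/2, i.e. the ordered product over all non-root vertices v of the gates exp(−(iπ/4)·Z_{parent(v)}Y_v) (each vertex's gate applied to the state after the gate of its parent) applied to |+⟩^{⊗N}, equals (|s⟩ + |s̄⟩)/√2. -/
open Matrix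

noncomputable section

/-- An `N`-qubit state: a vector in `ℂ^({0,1}^N)` indexed by bit strings. -/
abbrev QState (N : ℕ) := (Fin N → Fin 2) → ℂ

/-- An `N`-qubit operator: a `2^N × 2^N` complex matrix indexed by bit strings. -/
abbrev QOp (N : ℕ) := Matrix (Fin N → Fin 2) (Fin N → Fin 2) ℂ

def PauliX : Matrix (Fin 2) (Fin 2) ℂ := !![0, 1; 1, 0]
def PauliY : Matrix (Fin 2) (Fin 2) ℂ := !![0, -Complex.I; Complex.I, 0]
def PauliZ : Matrix (Fin 2) (Fin 2) ℂ := !![1, 0; 0, -1]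

/-- The Kronecker (tensor) product `⊗ₖ P k` of one `2 × 2` matrix per qubit. -/
def pauliString {N : ℕ} (P : Fin N → Matrix (Fin 2) (Fin 2) ℂ) : QOp N :=
  fun x y => ∏ k, P k (x k) (y k)

/-- The operator acting as `A` on qubit `i`, `B` on qubit `j` and identity elsewhere. -/
def twoQubitOp {N : ℕ} (A B : Matrix (Fin 2) (Fin 2) ℂ) (i j : Fin N) : QOp N :=
  pauliString (fun k => if k = i then A else if k = j then B else 1)

/-- Computational basis vector `|x⟩`. -/
def ket {N : ℕ} (x : Fin N → Fin 2) : QState N := fun y => if y = x then 1 else 0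

/-- `|+⟩^{⊗N}`, the uniform vector with all coordinates `2^{-N/2}`. -/
def plusN (N : ℕ) : QState N := fun _ => (((Real.sqrt 2)⁻¹ : ℝ) : ℂ) ^ N

/-- Expectation value `⟨ψ| A |ψ⟩`. -/
def expval {N : ℕ} (ψ : QState N) (A : QOp N) : ℂ :=
  ∑ x, (starRingEnd ℂ) (ψ x) * (A *ᵥ ψ) x

/-- The set of edges of `G`, each listed once as an ordered pair `(i,j)` with `i < j`. -/
def edgePairs {N : ℕ} (G : SimpleGraph (Fin N)) [DecidableRel G.Adj] :
    Finset (Fin N × Fin N) :=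
  Finset.univ.filter (fun p : Fin N × Fin N => p.1 < p.2 ∧ G.Adj p.1 p.2)

/-- The cut size `C(x)`: the number of edges `(i,j)` of `G` with `x i ≠ x j`. -/
def cutSize {N : ℕ} (G : SimpleGraph (Fin N)) [DecidableRel G.Adj] (x : Fin N → Fin 2) : ℕ :=
  ((edgePairs G).filter (fun p => x p.1 ≠ x p.2)).card

/-- The MaxCut Hamiltonian `H_MC = ∑_{(i,j) ∈ E} Z_i Z_j`. -/
def HMC {N : ℕ} (G : SimpleGraph (Fin N)) [DecidableRel G.Adj] : QOp N :=
  ∑ p ∈ edgePairs G, twoQubitOp PauliZ PauliZ p.1 p.2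

/-- The cut-counting observable `Ĉ = (1/2) ∑_{(i,j) ∈ E} (1 - Z_i Z_j)`. -/
def Chat {N : ℕ} (G : SimpleGraph (Fin N)) [DecidableRel G.Adj] : QOp N :=
  (1/2 : ℂ) • ∑ p ∈ edgePairs G, ((1 : QOp N) - twoQubitOp PauliZ PauliZ p.1 p.2)

/-- The gate `e^{-iθ Z_i Y_j / 2}`. -/
def gateZY {N : ℕ} (θ : ℝ) (i j : Fin N) : QOp N :=
  NormedSpace.exp ((-Complex.I * ((θ : ℂ) / 2)) • twoQubitOp PauliZ PauliY i j)

/-- The gate `e^{-iθ Y_i Z_j / 2}`. -/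
def gateYZ {N : ℕ} (θ : ℝ) (i j : Fin N) : QOp N :=
  NormedSpace.exp ((-Complex.I * ((θ : ℂ) / 2)) • twoQubitOp PauliY PauliZ i j)

end

/-!
At angle `π/2` the gate `e^{-iπ/4 Z_p Y_v}` equals `(1 - i Z_p Y_v)/√2`. On a state that does not
depend on qubit `v` it acts diagonally, multiplying the amplitude of `x` by `√2` if `x_p ≠ x_v` and
by `0` otherwise. Hence it turns the product state "`|t⟩` on the qubits of `A`, `|+⟩` elsewhere"
into the same state for `A ∪ {v}` whenever `p ∈ A`, `v ∉ A` and `t_p ≠ t_v`. Splitting `|+⟩^{⊗N}`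
according to the value of the root qubit and letting the gates grow `A` from `{r}` to all qubits,
parents first, gives `(|s⟩ + |s̄⟩)/√2`.
-/
noncomputable section

theorem NormedSpace.exp_smul_of_mul_self_eq_one {𝔸 : Type*} [NormedRing 𝔸] [NormedAlgebra ℂ 𝔸]
    [CompleteSpace 𝔸] {M : 𝔸} (hM : M * M = 1) (c : ℂ) :
    NormedSpace.exp (c • M) = Complex.cosh c • (1 : 𝔸) + Complex.sinh c • M := by
  have hpow (n : ℕ) : (c • M) ^ (2 * n) = c ^ (2 * n) • (1 : 𝔸) := by
    rw [smul_pow, pow_mul M, sq, hM, one_pow]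
  refine (NormedSpace.exp_series_hasSum_exp' (𝕂 := ℂ) (c • M)).unique
    (HasSum.even_add_odd ?_ ?_)
  · convert (Complex.hasSum_cosh c).smul_const (1 : 𝔸) using 2 with n
    rw [hpow, smul_smul, div_eq_inv_mul]
  · convert (Complex.hasSum_sinh c).smul_const M using 2 with n
    rw [pow_succ, hpow, smul_mul_smul_comm, one_mul, smul_smul, div_eq_inv_mul, pow_succ]

attribute [local instance] Matrix.linftyOpNormedRing Matrix.linftyOpNormedAlgebra in
theorem Matrix.exp_smul_of_mul_self_eq_one {n : Type*} [Fintype n] [DecidableEq n]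
    {M : Matrix n n ℂ} (hM : M * M = 1) (c : ℂ) :
    NormedSpace.exp (c • M) = Complex.cosh c • (1 : Matrix n n ℂ) + Complex.sinh c • M :=
  NormedSpace.exp_smul_of_mul_self_eq_one hM c

theorem pauliString_mul {N : ℕ} (P Q : Fin N → Matrix (Fin 2) (Fin 2) ℂ) :
    pauliString P * pauliString Q = pauliString (fun k => P k * Q k) := by
  ext x y
  simp only [pauliString, mul_apply, ← Finset.prod_mul_distrib]
  exact (Fintype.prod_sum fun k b => P k (x k) b * Q k b (y k)).symm

theorem pauliString_one {N : ℕ} : pauliString (fun _ : Fin N => 1) = 1 := by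
  ext x y
  simp [pauliString, one_apply, Finset.prod_boole, funext_iff]

theorem twoQubitOp_mul_self {N : ℕ} {A B : Matrix (Fin 2) (Fin 2) ℂ} (hA : A * A = 1)
    (hB : B * B = 1) (i j : Fin N) : twoQubitOp A B i j * twoQubitOp A B i j = 1 := by
  rw [twoQubitOp, pauliString_mul, ← pauliString_one]
  congr 1 with k
  split_ifs <;> simp [hA, hB]

theorem PauliY_mul_self : PauliY * PauliY = 1 := by
  simp [PauliY, one_fin_two]

theorem PauliZ_mul_self : PauliZ * PauliZ = 1 := by
  simp [PauliZ, one_fin_two]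

theorem PauliZ_isDiag : PauliZ.IsDiag := by
  intro a b hab
  fin_cases a <;> fin_cases b <;> simp_all [PauliZ]

theorem ofReal_sqrt_two_mul_inv : ((Real.sqrt 2 : ℝ) : ℂ) * (((Real.sqrt 2)⁻¹ : ℝ) : ℂ) = 1 := by
  rw [← Complex.ofReal_mul, mul_inv_cancel₀ (by positivity), Complex.ofReal_one]

theorem gateZY_pi_div_two {N : ℕ} (i j : Fin N) :
    gateZY (Real.pi / 2) i j = (((Real.sqrt 2)⁻¹ : ℝ) : ℂ) • (1 : QOp N)
      + (-(((Real.sqrt 2)⁻¹ : ℝ) : ℂ) * Complex.I) • twoQubitOp PauliZ PauliY i j := by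
  have harg : -Complex.I * (((Real.pi / 2 : ℝ) : ℂ) / 2) =
      -(((Real.pi / 4 : ℝ) : ℂ) * Complex.I) := by
    push_cast; ring
  rw [gateZY, harg,
    exp_smul_of_mul_self_eq_one (twoQubitOp_mul_self PauliZ_mul_self PauliY_mul_self i j),
    Complex.cosh_neg, Complex.sinh_neg, Complex.cosh_mul_I, Complex.sinh_mul_I,
    ← Complex.ofReal_cos, ← Complex.ofReal_sin, Real.cos_pi_div_four, Real.sin_pi_div_four,
    Real.sqrt_div_self]
  ring_nf

theorem Matrix.mulVec_apply_eq_sum_mul {ι R : Type*} [Fintype ι] [NonUnitalNonAssocSemiring R]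
    (M : Matrix ι ι R) (ψ : ι → R) (x : ι) (h : ∀ y, M x y ≠ 0 → ψ y = ψ x) :
    (M *ᵥ ψ) x = (∑ y, M x y) * ψ x := by
  rw [mulVec, dotProduct, Finset.sum_mul]
  refine Finset.sum_congr rfl fun y _ => ?_
  by_cases hy : M x y = 0
  · simp [hy]
  · rw [h y hy]

theorem sum_pauliString_apply {N : ℕ} (P : Fin N → Matrix (Fin 2) (Fin 2) ℂ) (x : Fin N → Fin 2) :
    ∑ y, pauliString P x y = ∏ k, ∑ b, P k (x k) b :=
  (Fintype.prod_sum fun k b => P k (x k) b).symm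

theorem Matrix.IsDiag.sum_apply {n R : Type*} [Fintype n] [DecidableEq n] [AddCommMonoid R]
    {A : Matrix n n R} (hA : A.IsDiag) (a : n) : ∑ b, A a b = A a a :=
  Finset.sum_eq_single a (fun _ _ hb => hA (Ne.symm hb)) (by simp)

def IndepOfQubit {N : ℕ} (ψ : QState N) (j : Fin N) : Prop :=
  ∀ x y : Fin N → Fin 2, (∀ k, k ≠ j → x k = y k) → ψ x = ψ y

theorem twoQubitOp_mulVec_apply {N : ℕ} {A : Matrix (Fin 2) (Fin 2) ℂ} (hA : A.IsDiag)
    (B : Matrix (Fin 2) (Fin 2) ℂ) {i j : Fin N} (hij : i ≠ j) {ψ : QState N}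
    (hψ : IndepOfQubit ψ j) (x : Fin N → Fin 2) :
    (twoQubitOp A B i j *ᵥ ψ) x = A (x i) (x i) * (∑ b, B (x j) b) * ψ x := by
  set P : Fin N → Matrix (Fin 2) (Fin 2) ℂ := fun k => if k = i then A else if k = j then B else 1
  have hdiag : ∀ k, k ≠ j → (P k).IsDiag := by
    intro k hkj
    simp only [P]
    split_ifs
    · exact hA
    · exact isDiag_one
  have hoff : ∀ y, pauliString P x y ≠ 0 → ψ y = ψ x := fun y hy =>
    hψ _ _ fun k hkj => by_contra fun hk =>
      Finset.prod_ne_zero_iff.mp hy k (Finset.mem_univ k) (hdiag k hkj (Ne.symm hk))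
  rw [twoQubitOp, mulVec_apply_eq_sum_mul _ _ _ hoff, sum_pauliString_apply,
    Finset.prod_eq_mul i j hij (fun k _ hk => ?_) (by simp) (by simp), (hdiag i hij).sum_apply]
  · simp [P, hij.symm]
  · simp [P, hk.1, hk.2, isDiag_one.sum_apply]

theorem gateZY_pi_div_two_mulVec_apply {N : ℕ} {i j : Fin N} (hij : i ≠ j) {ψ : QState N}
    (hψ : IndepOfQubit ψ j) (x : Fin N → Fin 2) :
    (gateZY (Real.pi / 2) i j *ᵥ ψ) x = if x i = x j then 0 else (Real.sqrt 2 : ℂ) * ψ x := by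
  rw [gateZY_pi_div_two, add_mulVec, smul_mulVec, smul_mulVec, one_mulVec, Pi.add_apply,
    Pi.smul_apply, Pi.smul_apply, twoQubitOp_mulVec_apply PauliZ_isDiag _ hij hψ]
  have hI := Complex.I_mul_I
  have h2 : ((Real.sqrt 2 : ℝ) : ℂ) * (Real.sqrt 2 : ℝ) = 2 := by
    rw [← Complex.ofReal_mul, Real.mul_self_sqrt zero_le_two, Complex.ofReal_ofNat]
  generalize x i = a, x j = b
  fin_cases a <;> fin_cases b <;> simp [PauliZ, PauliY] <;> field_simp
  all_goals first
    | linear_combination ψ x * hI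
    | linear_combination -ψ x * hI - ψ x * h2

/-- The product state `|t⟩` on the qubits in `A` and `|+⟩` on the others; its nonzero amplitude
`√2 ^ #A * (√2)⁻¹ ^ N` is `2 ^ (-(N - #A) / 2)`. -/
def ketOn {N : ℕ} (t : Fin N → Fin 2) (A : Finset (Fin N)) : QState N := fun x =>
  if ∀ u ∈ A, x u = t u then (Real.sqrt 2 : ℂ) ^ A.card * (((Real.sqrt 2)⁻¹ : ℝ) : ℂ) ^ N else 0

theorem ketOn_indepOfQubit {N : ℕ} (t : Fin N → Fin 2) {A : Finset (Fin N)} {j : Fin N}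
    (hj : j ∉ A) : IndepOfQubit (ketOn t A) j := by
  intro x y hxy
  have hA : (∀ u ∈ A, x u = t u) ↔ (∀ u ∈ A, y u = t u) :=
    forall₂_congr fun u hu => by rw [hxy u (ne_of_mem_of_not_mem hu hj)]
  simp only [ketOn, hA]

theorem gateZY_pi_div_two_mulVec_ketOn {N : ℕ} {t : Fin N → Fin 2} {A : Finset (Fin N)}
    {p v : Fin N} (hp : p ∈ A) (hv : v ∉ A) (ht : t p ≠ t v) :
    gateZY (Real.pi / 2) p v *ᵥ ketOn t A = ketOn t (insert v A) := by
  funext x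
  rw [gateZY_pi_div_two_mulVec_apply (ne_of_mem_of_not_mem hp hv) (ketOn_indepOfQubit t hv)]
  simp only [ketOn, Finset.forall_mem_insert, Finset.card_insert_of_notMem hv]
  by_cases hA : ∀ u ∈ A, x u = t u
  · have hcut : x p = x v ↔ ¬ x v = t v := by
      rw [hA p hp]
      revert ht
      generalize t p = a, t v = b, x v = c
      decide +revert
    by_cases hxv : x v = t v
    · rw [if_neg (hcut.not.mpr (not_not.mpr hxv)), if_pos hA, if_pos ⟨hxv, hA⟩, pow_succ]
      ring
    · rw [if_pos (hcut.mpr hxv), if_neg fun h => hxv h.1]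
  · rw [if_neg hA, mul_zero, ite_self, if_neg fun h => hA h.2]

theorem List.foldl_mulVec_smul {α n R : Type*} [Fintype n] [CommSemiring R]
    (G : α → Matrix n n R) (l : List α) (c : R) (ψ : n → R) :
    l.foldl (fun ψ a => G a *ᵥ ψ) (c • ψ) = c • l.foldl (fun ψ a => G a *ᵥ ψ) ψ := by
  induction l generalizing ψ with
  | nil => rfl
  | cons a l ih => simp only [List.foldl_cons, mulVec_smul, ih]

theorem List.foldl_mulVec_add {α n R : Type*} [Fintype n] [NonUnitalNonAssocSemiring R]
    (G : α → Matrix n n R) (l : List α) (ψ φ : n → R) :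
    l.foldl (fun ψ a => G a *ᵥ ψ) (ψ + φ) =
      l.foldl (fun ψ a => G a *ᵥ ψ) ψ + l.foldl (fun ψ a => G a *ᵥ ψ) φ := by
  induction l generalizing ψ φ with
  | nil => rfl
  | cons a l ih => simp only [List.foldl_cons, mulVec_add, ih]

theorem foldl_gateZY_ketOn {N : ℕ} (parent : Fin N → Fin N) {t : Fin N → Fin 2}
    (l : List (Fin N)) (A : Finset (Fin N)) (hnodup : l.Nodup) (hdisj : ∀ v ∈ l, v ∉ A)
    (ht : ∀ v ∈ l, t (parent v) ≠ t v)
    (horder : ∀ v ∈ l, parent v ∈ A ∨ l.idxOf (parent v) < l.idxOf v) :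
    l.foldl (fun ψ v => gateZY (Real.pi / 2) (parent v) v *ᵥ ψ) (ketOn t A) =
      ketOn t (A ∪ l.toFinset) := by
  induction l generalizing A with
  | nil => simp
  | cons w l ih =>
    obtain ⟨hwl, hnodup⟩ := List.nodup_cons.mp hnodup
    have hw : parent w ∈ A := (horder w List.mem_cons_self).resolve_right (by simp)
    rw [List.foldl_cons, gateZY_pi_div_two_mulVec_ketOn hw (hdisj w List.mem_cons_self)
      (ht w List.mem_cons_self), ih (insert w A) hnodup, List.toFinset_cons,
      Finset.union_insert, Finset.insert_union]
    · intro v hv hvA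
      rcases Finset.mem_insert.mp hvA with rfl | hvA
      · exact hwl hv
      · exact hdisj v (List.mem_cons_of_mem w hv) hvA
    · exact fun v hv => ht v (List.mem_cons_of_mem w hv)
    · intro v hv
      have hvw : v ≠ w := ne_of_mem_of_not_mem hv hwl
      rcases horder v (List.mem_cons_of_mem w hv) with hpA | hlt
      · exact .inl (Finset.mem_insert_of_mem hpA)
      · by_cases hpw : parent v = w
        · exact .inl (hpw ▸ Finset.mem_insert_self w A)
        · rw [List.idxOf_cons_ne l (Ne.symm hpw), List.idxOf_cons_ne l (Ne.symm hvw)] at hlt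
          exact .inr (by omega)

theorem plusN_eq_smul_ketOn_add {N : ℕ} (t : Fin N → Fin 2) (r : Fin N) :
    plusN N = (((Real.sqrt 2)⁻¹ : ℝ) : ℂ) • (ketOn t {r} + ketOn (fun v => 1 - t v) {r}) := by
  funext x
  have hflip : x r = 1 - t r ↔ ¬ x r = t r := by
    generalize x r = a, t r = b
    decide +revert
  simp only [plusN, ketOn, Finset.mem_singleton, forall_eq, Finset.card_singleton, pow_one, hflip,
    Pi.smul_apply, Pi.add_apply, smul_eq_mul]
  split_ifs <;> linear_combination (-(((Real.sqrt 2)⁻¹ : ℝ) : ℂ) ^ N) * ofReal_sqrt_two_mul_inv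

theorem ketOn_univ {N : ℕ} (t : Fin N → Fin 2) : ketOn t Finset.univ = ket t := by
  funext x
  have hx : (∀ u ∈ Finset.univ, x u = t u) ↔ x = t := by simp [funext_iff]
  simp only [ketOn, ket, hx, Finset.card_univ, Fintype.card_fin, ← mul_pow,
    ofReal_sqrt_two_mul_inv, one_pow]

end

theorem iHVA_tree_state_eq_GHZ_general {N : ℕ}
    (T : SimpleGraph (Fin N)) (r : Fin N)
    (parent : Fin N → Fin N)
    (hparent : ∀ v, v ≠ r → T.Adj (parent v) v ∧ T.dist r (parent v) + 1 = T.dist r v)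
    (s : Fin N → Fin 2)
    (hs : ∀ u v, T.Adj u v → s u ≠ s v)
    (L : List (Fin N)) (hnodup : L.Nodup) (hmem : ∀ v, v ∈ L ↔ v ≠ r)
    (horder : ∀ v ∈ L, parent v ≠ r → L.idxOf (parent v) < L.idxOf v) :
    L.foldl (fun ψ v => gateZY (Real.pi / 2) (parent v) v *ᵥ ψ) (plusN N)
      = (((Real.sqrt 2)⁻¹ : ℝ) : ℂ) • (ket s + ket (fun v => 1 - s v)) := by
  have hdisj : ∀ v ∈ L, v ∉ ({r} : Finset (Fin N)) := fun v hv =>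
    Finset.notMem_singleton.mpr ((hmem v).mp hv)
  have hproper : ∀ v ∈ L, s (parent v) ≠ s v := fun v hv =>
    hs _ _ (hparent v ((hmem v).mp hv)).1
  have hproper_flip : ∀ v ∈ L, 1 - s (parent v) ≠ 1 - s v := fun v hv h =>
    hproper v hv (sub_right_injective h)
  have hrooted : ∀ v ∈ L, parent v ∈ ({r} : Finset (Fin N)) ∨ L.idxOf (parent v) < L.idxOf v :=
    fun v hv => (em (parent v = r)).imp Finset.mem_singleton.mpr (horder v hv)
  have hcover : {r} ∪ L.toFinset = Finset.univ := by
    ext v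
    simpa using (em (v = r)).imp_right (hmem v).mpr
  rw [plusN_eq_smul_ketOn_add s r, List.foldl_mulVec_smul, List.foldl_mulVec_add,
    foldl_gateZY_ketOn parent L {r} hnodup hdisj hproper hrooted,
    foldl_gateZY_ketOn parent L {r} hnodup hdisj hproper_flip hrooted, hcover,
    ketOn_univ, ketOn_univ]

/-- For a tree `T` on `Fin N` (`N ≥ 2`) rooted at `r`, with `parent` the
parent map, `s` the proper 2-coloring with `s r = 0`, and the gates
`exp (−(iπ/4)·Z_{parent v} Y_v)` applied to `|+⟩^{⊗N}` in any hierarchy-respecting order `L`,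
the resulting state equals `(|s⟩ + |s̄⟩)/√2`. -/
theorem iHVA_tree_state_eq_GHZ {N : ℕ} (hN : 2 ≤ N)
    (T : SimpleGraph (Fin N)) (hT : T.IsTree) (r : Fin N)
    (parent : Fin N → Fin N)
    (hparent : ∀ v, v ≠ r → T.Adj (parent v) v ∧ T.dist r (parent v) + 1 = T.dist r v)
    (s : Fin N → Fin 2) (hsr : s r = 0)
    (hs : ∀ u v, T.Adj u v → s u ≠ s v)
    (L : List (Fin N)) (hnodup : L.Nodup) (hmem : ∀ v, v ∈ L ↔ v ≠ r)
    (horder : ∀ v ∈ L, parent v ≠ r → L.idxOf (parent v) < L.idxOf v) :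
    L.foldl (fun ψ v => gateZY (Real.pi / 2) (parent v) v *ᵥ ψ) (plusN N)
      = (((Real.sqrt 2)⁻¹ : ℝ) : ℂ) • (ket s + ket (fun v => 1 - s v)) :=
  iHVA_tree_state_eq_GHZ_general T r parent hparent s hs L hnodup hmem horder
end

section
/- Let N ≥ 2, let T be a tree on vertex set Fin N with edge set E (so |E| = N−1), let s : Fin N → {0,1} be a proper 2-coloring of T, and let s̄ be its bitwise complement. Then the GHZ-type vector ψ = (|s⟩ + |s̄⟩)/√2 satisfies H_MC ψ = −(N−1)·ψ, and −(N−1) is the smallest eigenvalue of H_MC; i.e. ψ is a ground state of the MaxCut Hamiltonian of the tree. -/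
open Matrix

noncomputable section

/-!
`H_MC` is diagonal in the computational basis: `Z_i Z_j |x⟩ = ±|x⟩` according to whether the edge
`(i,j)` is uncut or cut by `x`, so `H_MC |x⟩ = (|E| - 2 C(x)) |x⟩`. Its eigenvalues are therefore the
numbers `|E| - 2 C(x)`, the least possible one being `-|E|`, attained exactly when every edge is
cut. A proper 2-coloring `s` and its complement cut every edge, and a tree has `|E| = N - 1`.
-/

open Matrix Finset

section DiagonalSpectrum

variable {n : Type*} [Fintype n] [DecidableEq n]

lemma diagonal_mulVec_single_one {R : Type*} [Semiring R] (d : n → R) (x : n) :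
    diagonal d *ᵥ Pi.single x 1 = d x • Pi.single x 1 := by
  rw [diagonal_mulVec_single, ← smul_eq_mul, Pi.single_smul]

lemma exists_eq_of_diagonal_mulVec_eq_smul {R : Type*} [Ring R] [IsDomain R] {d : n → R} {μ : R}
    {ψ : n → R} (hψ : ψ ≠ 0) (h : diagonal d *ᵥ ψ = μ • ψ) : ∃ x, d x = μ := by
  obtain ⟨x, hx⟩ := Function.ne_iff.mp hψ
  refine ⟨x, mul_right_cancel₀ hx ?_⟩
  simpa [mulVec_diagonal] using congrFun h x

lemma setOf_eigenvalue_diagonal_ofReal (d : n → ℝ) :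
    {μ : ℝ | ∃ ψ : n → ℂ, ψ ≠ 0 ∧ diagonal (fun x => (d x : ℂ)) *ᵥ ψ = (μ : ℂ) • ψ} =
      Set.range d := by
  ext μ
  constructor
  · rintro ⟨ψ, hψ, h⟩
    obtain ⟨x, hx⟩ := exists_eq_of_diagonal_mulVec_eq_smul hψ h
    exact ⟨x, Complex.ofReal_injective hx⟩
  · rintro ⟨x, rfl⟩
    exact ⟨Pi.single x 1, by simp, diagonal_mulVec_single_one _ x⟩

end DiagonalSpectrum

lemma ket_eq_single {N : ℕ} (x : Fin N → Fin 2) : ket x = Pi.single x 1 := by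
  ext y
  simp [ket, Pi.single_apply]

lemma pauliString_diagonal {N : ℕ} (d : Fin N → Fin 2 → ℂ) :
    pauliString (fun k => diagonal (d k)) = diagonal fun x => ∏ k, d k (x k) := by
  ext x y
  simp only [pauliString, diagonal_apply, Fintype.prod_ite_zero, ← funext_iff]

lemma twoQubitOp_diagonal {N : ℕ} (a b : Fin 2 → ℂ) {i j : Fin N} (hij : i ≠ j) :
    twoQubitOp (diagonal a) (diagonal b) i j = diagonal fun x => a (x i) * b (x j) := by
  have hfactors : (fun k => if k = i then diagonal a else if k = j then diagonal b else 1) =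
      fun k => diagonal (if k = i then a else if k = j then b else 1) := by
    funext k
    split_ifs <;> simp
  rw [twoQubitOp, hfactors, pauliString_diagonal]
  congr 1
  funext x
  refine Fintype.prod_eq_mul i j hij (fun k hk => by simp [hk.1, hk.2]) |>.trans ?_
  simp [hij.symm]

lemma PauliZ_eq_diagonal : PauliZ = diagonal ![1, -1] := by
  ext a b
  fin_cases a <;> fin_cases b <;> simp [PauliZ]

lemma pauliZ_sign_mul (a b : Fin 2) :
    (![1, -1] a : ℂ) * ![1, -1] b = if a = b then 1 else -1 := by
  fin_cases a <;> fin_cases b <;> norm_num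

section MaxCut

variable {N : ℕ} (G : SimpleGraph (Fin N)) [DecidableRel G.Adj]

lemma sum_edgePairs_sign_eq (x : Fin N → Fin 2) :
    ∑ p ∈ edgePairs G, (if x p.1 = x p.2 then (1 : ℝ) else -1) =
      #(edgePairs G) - 2 * cutSize G x := by
  rw [sum_ite, sum_const, sum_const, cutSize,
    ← card_filter_add_card_filter_not (s := edgePairs G) (fun p => x p.1 = x p.2)]
  simp only [nsmul_eq_mul, mul_one, mul_neg, Nat.cast_add, ne_eq]
  ring

lemma HMC_eq_diagonal :
    HMC G = diagonal fun x => (((#(edgePairs G) : ℝ) - 2 * cutSize G x : ℝ) : ℂ) := by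
  have hterm : ∀ p ∈ edgePairs G, twoQubitOp PauliZ PauliZ p.1 p.2 =
      diagonal fun x => if x p.1 = x p.2 then (1 : ℂ) else -1 := by
    intro p hp
    rw [PauliZ_eq_diagonal, twoQubitOp_diagonal _ _ (mem_filter.mp hp).2.1.ne]
    simp only [pauliZ_sign_mul]
  rw [HMC, sum_congr rfl hterm]
  refine (map_sum (diagonalAddMonoidHom _ ℂ) _ _).symm.trans (congrArg diagonal ?_)
  funext x
  rw [← sum_edgePairs_sign_eq, Complex.ofReal_sum, Finset.sum_apply]
  exact sum_congr rfl fun _ _ => by split_ifs <;> simp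

lemma cutSize_le_card_edgePairs (x : Fin N → Fin 2) : cutSize G x ≤ #(edgePairs G) :=
  card_filter_le _ _

lemma cutSize_eq_card_edgePairs {x : Fin N → Fin 2} (hx : ∀ u v, G.Adj u v → x u ≠ x v) :
    cutSize G x = #(edgePairs G) :=
  congrArg card <| filter_true_of_mem fun _ hp => hx _ _ (mem_filter.mp hp).2.2

lemma card_edgePairs : #(edgePairs G) = #G.edgeFinset := by
  refine card_bij (fun p _ => s(p.1, p.2)) (fun p hp => ?_) (fun p hp q hq h => ?_) ?_
  · exact SimpleGraph.mem_edgeFinset.mpr (mem_filter.mp hp).2.2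
  · have hp' := (mem_filter.mp hp).2.1
    have hq' := (mem_filter.mp hq).2.1
    rcases Sym2.eq_iff.mp h with ⟨h1, h2⟩ | ⟨h1, h2⟩
    · exact Prod.ext h1 h2
    · exact absurd hq' (by rw [← h1, ← h2]; exact hp'.asymm)
  · intro e he
    induction e using Sym2.ind with
    | _ a b =>
      have hadj : G.Adj a b := SimpleGraph.mem_edgeFinset.mp he
      rcases hadj.ne.lt_or_gt with hab | hba
      · exact ⟨(a, b), mem_filter.mpr ⟨mem_univ _, hab, hadj⟩, rfl⟩
      · exact ⟨(b, a), mem_filter.mpr ⟨mem_univ _, hba, hadj.symm⟩, Sym2.eq_swap⟩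

lemma SimpleGraph.IsTree.card_edgePairs {G : SimpleGraph (Fin N)} [DecidableRel G.Adj]
    (hG : G.IsTree) : (#(edgePairs G) : ℝ) = N - 1 := by
  have h := hG.card_edgeFinset
  rw [Fintype.card_fin] at h
  rw [_root_.card_edgePairs]
  exact eq_sub_of_add_eq (by exact_mod_cast h)

end MaxCut

theorem GHZ_is_ground_state_of_tree_HMC_general {N : ℕ}
    (T : SimpleGraph (Fin N)) [DecidableRel T.Adj] (hT : T.IsTree)
    (s : Fin N → Fin 2) (hs : ∀ u v, T.Adj u v → s u ≠ s v) :
    HMC T *ᵥ ((((Real.sqrt 2)⁻¹ : ℝ) : ℂ) • (ket s + ket (fun v => 1 - s v)))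
        = ((-((N : ℝ) - 1) : ℝ) : ℂ) •
            ((((Real.sqrt 2)⁻¹ : ℝ) : ℂ) • (ket s + ket (fun v => 1 - s v))) ∧
    IsLeast {μ : ℝ | ∃ ψ : QState N, ψ ≠ 0 ∧ HMC T *ᵥ ψ = (μ : ℂ) • ψ} (-((N : ℝ) - 1)) := by
  have hs_compl : ∀ u v, T.Adj u v → 1 - s u ≠ 1 - s v := fun u v huv =>
    (sub_right_injective (G := Fin 2)).ne (hs u v huv)
  have henergy_of_proper : ∀ {x : Fin N → Fin 2}, (∀ u v, T.Adj u v → x u ≠ x v) →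
      (#(edgePairs T) : ℝ) - 2 * cutSize T x = -((N : ℝ) - 1) := fun hx => by
    rw [cutSize_eq_card_edgePairs T hx, ← hT.card_edgePairs]
    ring
  rw [HMC_eq_diagonal, setOf_eigenvalue_diagonal_ofReal]
  refine ⟨?_, ⟨s, henergy_of_proper hs⟩, ?_⟩
  · rw [mulVec_smul, mulVec_add, ket_eq_single, ket_eq_single, diagonal_mulVec_single_one,
      diagonal_mulVec_single_one, henergy_of_proper hs, henergy_of_proper hs_compl, ← smul_add, smul_comm]
  · rintro _ ⟨x, rfl⟩
    have hcut : (cutSize T x : ℝ) ≤ #(edgePairs T) := mod_cast cutSize_le_card_edgePairs T x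
    rw [← hT.card_edgePairs]
    linarith

/-- For a tree `T` on `Fin N` (`N ≥ 2`) with proper 2-coloring `s`, the
GHZ-type vector `ψ = (|s⟩ + |s̄⟩)/√2` satisfies `H_MC ψ = −(N−1) ψ` and `−(N−1)` is the
smallest eigenvalue of `H_MC`; i.e. `ψ` is a ground state of the tree's MaxCut Hamiltonian. -/
theorem GHZ_is_ground_state_of_tree_HMC {N : ℕ} (hN : 2 ≤ N)
    (T : SimpleGraph (Fin N)) [DecidableRel T.Adj] (hT : T.IsTree)
    (s : Fin N → Fin 2) (hs : ∀ u v, T.Adj u v → s u ≠ s v) :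
    HMC T *ᵥ ((((Real.sqrt 2)⁻¹ : ℝ) : ℂ) • (ket s + ket (fun v => 1 - s v)))
        = ((-((N : ℝ) - 1) : ℝ) : ℂ) •
            ((((Real.sqrt 2)⁻¹ : ℝ) : ℂ) • (ket s + ket (fun v => 1 - s v))) ∧
    IsLeast {μ : ℝ | ∃ ψ : QState N, ψ ≠ 0 ∧ HMC T *ᵥ ψ = (μ : ℂ) • ψ} (-((N : ℝ) - 1)) :=
  GHZ_is_ground_state_of_tree_HMC_general T hT s hs
end
end
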